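/- Let (Y_1,…,Y_N) be multinomial with 2N trials and uniform probability 1/N, let ξ_k^N = (1/N)Σ_{i=1}^N 1{Y_i = k} be the empirical in-degree distribution (with ξ_k^N := 0 for k > 2N), and let P_k^2 = e^{-2}2^k/k!. Then for every ε > 0, P( Σ_{k=0}^∞ (k+1)^2 |ξ_k^N − P_k^2| > ε ) → 0 as N → ∞. -/

import Mathlib

open Finset Filter

/-- The Poisson(2) probability `P_k^2 = e^{-2} 2^k / k!`. -/
noncomputable def poisson2 (k : ℕ) : ℝ := Real.exp (-2) * 2 ^ k / (Nat.factorial k : ℝ)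

/-- The empirical in-degree distribution `ξ_k^N = (1/N) ∑_{i=1}^N 1{Y_i = k}` of the
multinomial vector realized by dropping `2N` balls `ω : Fin (2N) → Fin N` uniformly into
`N` boxes, `Y_i ω = #{b : ω b = i}`.  (For `k > 2N` it vanishes automatically.) -/
noncomputable def empDeg (N k : ℕ) (ω : Fin (2 * N) → Fin N) : ℝ :=
  (1 / (N : ℝ)) * ∑ i : Fin N,
    (if (Finset.univ.filter (fun b => ω b = i)).card = k then (1 : ℝ) else 0)

def cOne (N k : ℕ) : ℕ := (2 * N).choose k * (N - 1) ^ (2 * N - k)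
def cTwo (N k : ℕ) : ℕ := (2 * N).choose k * ((2 * N - k).choose k * (N - 2) ^ (2 * N - k - k))


/-- Any `ω` in the `piFinset` with fibers forced by `s` has `i`-fiber exactly `s`. -/
lemma fiber_of_mem_piFinset {m N : ℕ} {i : Fin N} {s : Finset (Fin m)}
    {ω : Fin m → Fin N}
    (h : ω ∈ Fintype.piFinset (fun b => if b ∈ s then ({i} : Finset (Fin N)) else univ.erase i)) :
    univ.filter (fun b => ω b = i) = s := by
  ext b
  have hb := Fintype.mem_piFinset.1 h b
  simp only [mem_filter, mem_univ, true_and]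
  by_cases hbs : b ∈ s
  · rw [if_pos hbs] at hb
    simp only [mem_singleton] at hb
    simp [hb, hbs]
  · rw [if_neg hbs] at hb
    simp only [mem_erase] at hb
    simp [hb.1, hbs]

lemma count_one (m N k : ℕ) (i : Fin N) :
    ((univ : Finset (Fin m → Fin N)).filter
        (fun ω => (univ.filter (fun b => ω b = i)).card = k)).card
      = m.choose k * (N - 1) ^ (m - k) := by
  classical
  have hrepr : (univ : Finset (Fin m → Fin N)).filter
        (fun ω => (univ.filter (fun b => ω b = i)).card = k)
      = (powersetCard k (univ : Finset (Fin m))).biUnion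
          (fun s => Fintype.piFinset (fun b => if b ∈ s then {i} else univ.erase i)) := by
    ext ω
    simp only [mem_filter, mem_univ, true_and, mem_biUnion, mem_powersetCard]
    constructor
    · intro h
      refine ⟨univ.filter (fun b => ω b = i), ⟨subset_univ _, h⟩, ?_⟩
      refine Fintype.mem_piFinset.2 fun b => ?_
      by_cases hb : ω b = i
      · simp [hb]
      · simp [hb]
    · rintro ⟨s, ⟨-, hs⟩, h⟩
      rw [fiber_of_mem_piFinset h, hs]
  rw [hrepr, card_biUnion]
  · have hcard : ∀ s ∈ powersetCard k (univ : Finset (Fin m)),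
        (Fintype.piFinset (fun b => if b ∈ s then ({i} : Finset (Fin N)) else univ.erase i)).card
          = (N - 1) ^ (m - k) := by
      intro s hs
      obtain ⟨-, hsk⟩ := mem_powersetCard.1 hs
      rw [Fintype.card_piFinset]
      rw [← prod_sdiff (subset_univ s)]
      have h1 : ∀ b ∈ (univ : Finset (Fin m)) \ s,
          (if b ∈ s then ({i} : Finset (Fin N)) else univ.erase i).card = N - 1 := by
        intro b hb
        rw [if_neg (mem_sdiff.1 hb).2, card_erase_of_mem (mem_univ i), card_univ,
          Fintype.card_fin]
      have h2 : ∀ b ∈ s, (if b ∈ s then ({i} : Finset (Fin N)) else univ.erase i).card = 1 := by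
        intro b hb
        rw [if_pos hb, card_singleton]
      rw [prod_congr rfl h1, prod_congr rfl h2, prod_const, prod_const_one, mul_one,
        card_sdiff_of_subset (subset_univ s), card_univ, Fintype.card_fin, hsk]
    rw [sum_congr rfl hcard, sum_const, card_powersetCard, card_univ, Fintype.card_fin,
      smul_eq_mul]
  · intro s hs t ht hst
    refine Finset.disjoint_left.2 fun ω hω1 hω2 => hst ?_
    rw [← fiber_of_mem_piFinset hω1, fiber_of_mem_piFinset hω2]


lemma fibers_of_mem_piFinset2 {m N : ℕ} {i j : Fin N} (hij : i ≠ j) {s t : Finset (Fin m)}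
    (hts : t ⊆ univ \ s) {ω : Fin m → Fin N}
    (h : ω ∈ Fintype.piFinset (fun b =>
      if b ∈ s then ({i} : Finset (Fin N)) else if b ∈ t then {j} else (univ.erase i).erase j)) :
    univ.filter (fun b => ω b = i) = s ∧ univ.filter (fun b => ω b = j) = t := by
  have hd : ∀ b ∈ t, b ∉ s := fun b hb => (mem_sdiff.1 (hts hb)).2
  constructor
  · ext b
    have hb := Fintype.mem_piFinset.1 h b
    simp only [mem_filter, mem_univ, true_and]
    by_cases hbs : b ∈ s
    · rw [if_pos hbs] at hb; simp only [mem_singleton] at hb; simp [hb, hbs]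
    · rw [if_neg hbs] at hb
      by_cases hbt : b ∈ t
      · rw [if_pos hbt] at hb; simp only [mem_singleton] at hb
        simp only [hb]
        exact iff_of_false (Ne.symm hij) hbs
      · rw [if_neg hbt] at hb
        simp only [mem_erase] at hb
        exact iff_of_false hb.2.1 hbs
  · ext b
    have hb := Fintype.mem_piFinset.1 h b
    simp only [mem_filter, mem_univ, true_and]
    by_cases hbs : b ∈ s
    · rw [if_pos hbs] at hb; simp only [mem_singleton] at hb
      simp only [hb]
      exact iff_of_false hij (fun hbt => hd b hbt hbs)
    · rw [if_neg hbs] at hb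
      by_cases hbt : b ∈ t
      · rw [if_pos hbt] at hb; simp only [mem_singleton] at hb; simp [hb, hbt]
      · rw [if_neg hbt] at hb
        simp only [mem_erase] at hb
        exact iff_of_false hb.1 hbt

lemma count_two (m N k : ℕ) (i j : Fin N) (hij : i ≠ j) :
    ((univ : Finset (Fin m → Fin N)).filter
        (fun ω => (univ.filter (fun b => ω b = i)).card = k ∧
                  (univ.filter (fun b => ω b = j)).card = k)).card
      = m.choose k * ((m - k).choose k * (N - 2) ^ (m - k - k)) := by
  classical
  have hrepr : (univ : Finset (Fin m → Fin N)).filter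
        (fun ω => (univ.filter (fun b => ω b = i)).card = k ∧
                  (univ.filter (fun b => ω b = j)).card = k)
      = (powersetCard k (univ : Finset (Fin m))).biUnion
          (fun s => (powersetCard k ((univ : Finset (Fin m)) \ s)).biUnion
            (fun t => Fintype.piFinset (fun b =>
              if b ∈ s then {i} else if b ∈ t then {j} else (univ.erase i).erase j))) := by
    ext ω
    simp only [mem_filter, mem_univ, true_and, mem_biUnion, mem_powersetCard]
    constructor
    · rintro ⟨h1, h2⟩
      refine ⟨univ.filter (fun b => ω b = i), ⟨subset_univ _, h1⟩,
        univ.filter (fun b => ω b = j), ⟨?_, h2⟩, ?_⟩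
      · intro b hb
        simp only [mem_filter, mem_univ, true_and] at hb
        rw [Finset.mem_sdiff]; simp only [mem_univ, true_and, mem_filter]
        intro hbi
        exact hij (by rw [← hbi, hb])
      · refine Fintype.mem_piFinset.2 fun b => ?_
        by_cases hbi : ω b = i
        · simp [hbi]
        · have hbs : b ∉ univ.filter (fun b => ω b = i) := by simp [hbi]
          by_cases hbj : ω b = j
          · have hbt : b ∈ univ.filter (fun b => ω b = j) := by simp [hbj]
            rw [if_neg hbs, if_pos hbt]; simp [hbj]
          · have hbt : b ∉ univ.filter (fun b => ω b = j) := by simp [hbj]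
            rw [if_neg hbs, if_neg hbt]
            simp [mem_erase, hbi, hbj]
    · rintro ⟨s, ⟨-, hs⟩, t, ⟨hts, ht⟩, h⟩
      obtain ⟨e1, e2⟩ := fibers_of_mem_piFinset2 hij hts h
      rw [e1, e2, hs, ht]
      exact ⟨rfl, rfl⟩
  rw [hrepr, card_biUnion]
  · have houter : ∀ s ∈ powersetCard k (univ : Finset (Fin m)),
        ((powersetCard k ((univ : Finset (Fin m)) \ s)).biUnion
            (fun t => Fintype.piFinset (fun b =>
              if b ∈ s then ({i} : Finset (Fin N)) else if b ∈ t then {j}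
                else (univ.erase i).erase j))).card
          = (m - k).choose k * (N - 2) ^ (m - k - k) := by
      intro s hs
      obtain ⟨-, hsk⟩ := mem_powersetCard.1 hs
      rw [card_biUnion]
      · have hinner : ∀ t ∈ powersetCard k ((univ : Finset (Fin m)) \ s),
            (Fintype.piFinset (fun b =>
              if b ∈ s then ({i} : Finset (Fin N)) else if b ∈ t then {j}
                else (univ.erase i).erase j)).card = (N - 2) ^ (m - k - k) := by
          intro t ht
          obtain ⟨hts, htk⟩ := mem_powersetCard.1 ht
          rw [Fintype.card_piFinset]
          have hd : Disjoint s t := by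
            refine Finset.disjoint_left.2 fun b hbs hbt => ?_
            exact (mem_sdiff.1 (hts hbt)).2 hbs
          rw [← prod_sdiff (subset_univ (s ∪ t)), prod_union hd]
          have h1 : ∀ b ∈ (univ : Finset (Fin m)) \ (s ∪ t),
              (if b ∈ s then ({i} : Finset (Fin N)) else if b ∈ t then {j}
                else (univ.erase i).erase j).card = N - 2 := by
            intro b hb
            obtain ⟨-, hb2⟩ := mem_sdiff.1 hb
            rw [mem_union] at hb2
            push_neg at hb2
            rw [if_neg hb2.1, if_neg hb2.2,
              card_erase_of_mem (mem_erase.2 ⟨Ne.symm hij, mem_univ j⟩),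
              card_erase_of_mem (mem_univ i), card_univ, Fintype.card_fin]
            omega
          have h2s : ∀ b ∈ s,
              (if b ∈ s then ({i} : Finset (Fin N)) else if b ∈ t then {j}
                else (univ.erase i).erase j).card = 1 := by
            intro b hb
            rw [if_pos hb, card_singleton]
          have h2t : ∀ b ∈ t,
              (if b ∈ s then ({i} : Finset (Fin N)) else if b ∈ t then {j}
                else (univ.erase i).erase j).card = 1 := by
            intro b hb
            rw [if_neg (Finset.disjoint_right.1 hd hb), if_pos hb, card_singleton]
          rw [prod_congr rfl h1, prod_congr rfl h2s, prod_congr rfl h2t]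
          simp only [prod_const, one_pow, mul_one]
          rw [card_sdiff_of_subset (subset_univ _), card_univ, Fintype.card_fin,
            card_union_of_disjoint hd, hsk, htk]
          congr 1
          omega
        rw [sum_congr rfl hinner, sum_const, card_powersetCard,
          card_sdiff_of_subset (subset_univ s), card_univ, Fintype.card_fin, hsk, smul_eq_mul]
      · intro t1 ht1 t2 ht2 h12
        refine Finset.disjoint_left.2 fun ω hω1 hω2 => h12 ?_
        rw [← (fibers_of_mem_piFinset2 hij (mem_powersetCard.1 ht1).1 hω1).2,
          (fibers_of_mem_piFinset2 hij (mem_powersetCard.1 ht2).1 hω2).2]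
    rw [sum_congr rfl houter, sum_const, card_powersetCard, card_univ, Fintype.card_fin,
      smul_eq_mul]
  · intro s1 hs1 s2 hs2 h12
    refine Finset.disjoint_left.2 fun ω hω1 hω2 => h12 ?_
    obtain ⟨t1, ht1, hωt1⟩ := mem_biUnion.1 hω1
    obtain ⟨t2, ht2, hωt2⟩ := mem_biUnion.1 hω2
    rw [← (fibers_of_mem_piFinset2 hij (mem_powersetCard.1 ht1).1 hωt1).1,
      (fibers_of_mem_piFinset2 hij (mem_powersetCard.1 ht2).1 hωt2).1]


lemma sum_indicator (N k : ℕ) (i : Fin N) :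
    (∑ ω : Fin (2 * N) → Fin N,
        (if (univ.filter (fun b => ω b = i)).card = k then (1 : ℝ) else 0))
      = (cOne N k : ℝ) := by
  classical
  rw [Finset.sum_boole]
  norm_cast
  exact count_one (2 * N) N k i

lemma sum_empDeg (N k : ℕ) (hN : 1 ≤ N) :
    ∑ ω : Fin (2 * N) → Fin N, empDeg N k ω = (cOne N k : ℝ) := by
  classical
  have hN0 : (N : ℝ) ≠ 0 := Nat.cast_ne_zero.2 (by omega)
  unfold empDeg
  rw [← Finset.mul_sum, Finset.sum_comm]
  rw [Finset.sum_congr rfl fun i _ => sum_indicator N k i, Finset.sum_const, card_univ,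
    Fintype.card_fin, nsmul_eq_mul]
  field_simp

lemma sum_empDeg_sq (N k : ℕ) :
    ∑ ω : Fin (2 * N) → Fin N, (empDeg N k ω) ^ 2
      = (1 / (N : ℝ)) * ((cOne N k : ℝ) + ((N : ℝ) - 1) * (cTwo N k : ℝ)) := by
  classical
  rcases Nat.eq_zero_or_pos N with rfl | hN
  · simp [empDeg]
  have key : ∀ ω : Fin (2 * N) → Fin N, (empDeg N k ω) ^ 2
      = (1 / (N : ℝ)) ^ 2 * ∑ i : Fin N, ∑ j : Fin N,
          ((if (univ.filter (fun b => ω b = i)).card = k then (1 : ℝ) else 0) *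
           (if (univ.filter (fun b => ω b = j)).card = k then (1 : ℝ) else 0)) := by
    intro ω
    unfold empDeg
    rw [mul_pow]
    congr 1
    rw [sq, Finset.sum_mul_sum]
  rw [Finset.sum_congr rfl fun ω _ => key ω, ← Finset.mul_sum]
  rw [Finset.sum_comm]
  have inner : ∀ i : Fin N,
      (∑ ω : Fin (2 * N) → Fin N, ∑ j : Fin N,
          ((if (univ.filter (fun b => ω b = i)).card = k then (1 : ℝ) else 0) *
           (if (univ.filter (fun b => ω b = j)).card = k then (1 : ℝ) else 0)))
        = (cOne N k : ℝ) + ((N : ℝ) - 1) * (cTwo N k : ℝ) := by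
    intro i
    rw [Finset.sum_comm]
    have hterm : ∀ j : Fin N,
        (∑ ω : Fin (2 * N) → Fin N,
          ((if (univ.filter (fun b => ω b = i)).card = k then (1 : ℝ) else 0) *
           (if (univ.filter (fun b => ω b = j)).card = k then (1 : ℝ) else 0)))
          = if j = i then (cOne N k : ℝ) else (cTwo N k : ℝ) := by
      intro j
      by_cases hji : j = i
      · subst hji
        rw [if_pos rfl]
        rw [← sum_indicator N k j]
        refine Finset.sum_congr rfl fun ω _ => ?_
        by_cases h : (univ.filter (fun b => ω b = j)).card = k <;> simp [h]
      · rw [if_neg hji]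
        have : ∀ ω : Fin (2 * N) → Fin N,
            ((if (univ.filter (fun b => ω b = i)).card = k then (1 : ℝ) else 0) *
             (if (univ.filter (fun b => ω b = j)).card = k then (1 : ℝ) else 0))
              = if ((univ.filter (fun b => ω b = i)).card = k ∧
                    (univ.filter (fun b => ω b = j)).card = k) then (1 : ℝ) else 0 := by
          intro ω
          by_cases h1 : (univ.filter (fun b => ω b = i)).card = k <;>
            by_cases h2 : (univ.filter (fun b => ω b = j)).card = k <;>
              simp [h1, h2]
        rw [Finset.sum_congr rfl fun ω _ => this ω, Finset.sum_boole]
        norm_cast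
        exact count_two (2 * N) N k i j (Ne.symm hji)
    rw [Finset.sum_congr rfl fun j _ => hterm j]
    rw [← Finset.add_sum_erase _ _ (mem_univ i), if_pos rfl,
      Finset.sum_congr rfl (fun j hj => if_neg (Finset.mem_erase.1 hj).1), Finset.sum_const,
      Finset.card_erase_of_mem (mem_univ i), card_univ, Fintype.card_fin, nsmul_eq_mul,
      Nat.cast_sub hN, Nat.cast_one]
  rw [Finset.sum_congr rfl fun i _ => inner i, Finset.sum_const, card_univ, Fintype.card_fin,
    nsmul_eq_mul]
  have hN0 : (N : ℝ) ≠ 0 := Nat.cast_ne_zero.2 (by omega)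
  field_simp


lemma tendsto_prod_factor (c : ℕ) :
    Tendsto (fun N : ℕ => 2 - ((c : ℝ) / (N : ℝ))) atTop (nhds 2) := by
  have h : Tendsto (fun N : ℕ => (c : ℝ) / (N : ℝ)) atTop (nhds 0) := by
    simpa [div_eq_mul_inv, mul_comm] using
      tendsto_one_div_atTop_nhds_zero_nat.const_mul (c : ℝ)
  simpa using tendsto_const_nhds.sub h

lemma cast_choose_eq (m k : ℕ) (hk : k ≤ m) :
    ((m.choose k : ℕ) : ℝ) = (∏ j ∈ range k, ((m : ℝ) - j)) / (Nat.factorial k : ℝ) := by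
  have h := Nat.descFactorial_eq_factorial_mul_choose m k
  have h2 : ((m.descFactorial k : ℕ) : ℝ) = ∏ j ∈ range k, ((m : ℝ) - j) := by
    rw [Nat.descFactorial_eq_prod_range, Nat.cast_prod]
    refine Finset.prod_congr rfl fun j hj => ?_
    have hj' : j ≤ m := le_trans (le_of_lt (mem_range.1 hj)) hk
    rw [Nat.cast_sub hj']
  have hfac : (Nat.factorial k : ℝ) ≠ 0 := Nat.cast_ne_zero.2 (Nat.factorial_ne_zero k)
  field_simp [← h2, h]
  rw [← h2, h]; push_cast; ring

lemma tendsto_bq (k : ℕ) :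
    Tendsto (fun N : ℕ => (cOne N k : ℝ) / (N : ℝ) ^ (2 * N)) atTop (nhds (poisson2 k)) := by
  have hfac : (Nat.factorial k : ℝ) ≠ 0 := Nat.cast_ne_zero.2 (Nat.factorial_ne_zero k)
  -- model function
  have hprod : Tendsto (fun N : ℕ => ∏ j ∈ range k, (2 - (j : ℝ) / (N : ℝ))) atTop
      (nhds (2 ^ k)) := by
    have := tendsto_finset_prod (f := fun (j : ℕ) (N : ℕ) => 2 - (j : ℝ) / (N : ℝ))
      (a := fun _ => (2 : ℝ)) (range k) (fun j _ => tendsto_prod_factor j)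
    simpa [Finset.prod_const, Finset.card_range] using this
  have hexp := Real.tendsto_one_add_div_pow_exp (-1)
  have hbase : Tendsto (fun N : ℕ => ((1 + (-1) / (N : ℝ)) ^ N) ^ 2) atTop
      (nhds (Real.exp (-1) * Real.exp (-1))) := by
    simpa [sq] using hexp.mul hexp
  have hone : Tendsto (fun N : ℕ => (1 + (-1) / (N : ℝ)) ^ k) atTop (nhds 1) := by
    have hb : Tendsto (fun N : ℕ => 1 + (-1) / (N : ℝ)) atTop (nhds 1) := by
      have h : Tendsto (fun N : ℕ => (-1 : ℝ) / (N : ℝ)) atTop (nhds 0) := by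
        simpa [div_eq_mul_inv, mul_comm] using
          tendsto_one_div_atTop_nhds_zero_nat.const_mul (-1 : ℝ)
      simpa using tendsto_const_nhds.add h
    simpa using hb.pow k
  have hmodel : Tendsto (fun N : ℕ =>
      (1 / (Nat.factorial k : ℝ)) * (∏ j ∈ range k, (2 - (j : ℝ) / (N : ℝ))) *
        (((1 + (-1) / (N : ℝ)) ^ N) ^ 2 / (1 + (-1) / (N : ℝ)) ^ k)) atTop
      (nhds ((1 / (Nat.factorial k : ℝ)) * 2 ^ k *
        ((Real.exp (-1) * Real.exp (-1)) / 1))) :=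
    (tendsto_const_nhds.mul hprod).mul (hbase.div hone one_ne_zero)
  have hval : (1 / (Nat.factorial k : ℝ)) * 2 ^ k * ((Real.exp (-1) * Real.exp (-1)) / 1)
      = poisson2 k := by
    rw [← Real.exp_add]
    unfold poisson2
    norm_num
    ring
  rw [hval] at hmodel
  refine hmodel.congr' ?_
  filter_upwards [eventually_ge_atTop (k + 2)] with N hN
  -- now the algebraic identity for N ≥ k + 2
  have hN2 : 2 ≤ N := by omega
  have hkN : k ≤ N := by omega
  have hk2N : k ≤ 2 * N := by omega
  have hN0 : (N : ℝ) ≠ 0 := Nat.cast_ne_zero.2 (by omega)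
  have hNR : (2 : ℝ) ≤ (N : ℝ) := by exact_mod_cast hN2
  have hN1 : (N : ℝ) - 1 ≠ 0 := by nlinarith
  have hbne : (1 : ℝ) + (-1) / (N : ℝ) ≠ 0 := by
    have : (1 : ℝ) + (-1) / (N : ℝ) = ((N : ℝ) - 1) / N := by field_simp; ring
    rw [this]
    exact div_ne_zero hN1 hN0
  have hc1 : (cOne N k : ℝ)
      = (∏ j ∈ range k, (2 * (N : ℝ) - j)) / (Nat.factorial k : ℝ) *
        ((N : ℝ) - 1) ^ (2 * N - k) := by
    unfold cOne
    push_cast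
    rw [cast_choose_eq (2 * N) k hk2N]
    rw [Nat.cast_sub (by omega : 1 ≤ N), Nat.cast_one]
    push_cast
    ring
  rw [hc1]
  -- transform the model side
  have e1 : (1 : ℝ) + (-1) / (N : ℝ) = ((N : ℝ) - 1) / N := by field_simp; ring
  have e2 : ∏ j ∈ range k, (2 - (j : ℝ) / (N : ℝ))
      = (∏ j ∈ range k, (2 * (N : ℝ) - j)) / (N : ℝ) ^ k := by
    have hfac2 : ∀ j ∈ range k, (2 - (j : ℝ) / (N : ℝ)) = (2 * (N : ℝ) - j) / (N : ℝ) := by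
      intro j hj
      field_simp
    rw [Finset.prod_congr rfl hfac2, Finset.prod_div_distrib, Finset.prod_const,
      Finset.card_range]
  have e3 : (((((N : ℝ) - 1) / N) ^ N) ^ 2) / ((((N : ℝ) - 1) / N) ^ k)
      = ((N : ℝ) - 1) ^ (2 * N - k) / (N : ℝ) ^ (2 * N - k) := by
    calc (((((N : ℝ) - 1) / N) ^ N) ^ 2) / ((((N : ℝ) - 1) / N) ^ k)
        = (((N : ℝ) - 1) / N) ^ (2 * N) * ((((N : ℝ) - 1) / N) ^ k)⁻¹ := by
          rw [← pow_mul, mul_comm N 2, div_eq_mul_inv]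
      _ = (((N : ℝ) - 1) / N) ^ (2 * N - k) :=
          (pow_sub₀ _ (div_ne_zero hN1 hN0) hk2N).symm
      _ = ((N : ℝ) - 1) ^ (2 * N - k) / (N : ℝ) ^ (2 * N - k) := by rw [div_pow]
  rw [e2, e1, e3]
  have hNN : (N : ℝ) ^ (2 * N) = (N : ℝ) ^ k * (N : ℝ) ^ (2 * N - k) := by
    rw [← pow_add]
    congr 1
    omega
  rw [hNN]
  field_simp
  try exact Or.inl trivial

lemma tendsto_cq (k : ℕ) :
    Tendsto (fun N : ℕ => (cTwo N k : ℝ) / (N : ℝ) ^ (2 * N)) atTop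
      (nhds ((poisson2 k) ^ 2)) := by
  have hfac : (Nat.factorial k : ℝ) ≠ 0 := Nat.cast_ne_zero.2 (Nat.factorial_ne_zero k)
  have hprod1 : Tendsto (fun N : ℕ => ∏ j ∈ range k, (2 - (j : ℝ) / (N : ℝ))) atTop
      (nhds (2 ^ k)) := by
    have := tendsto_finset_prod (f := fun (j : ℕ) (N : ℕ) => 2 - (j : ℝ) / (N : ℝ))
      (a := fun _ => (2 : ℝ)) (range k) (fun j _ => tendsto_prod_factor j)
    simpa [Finset.prod_const, Finset.card_range] using this
  have hprod2 : Tendsto (fun N : ℕ => ∏ j ∈ range k, (2 - ((k + j : ℕ) : ℝ) / (N : ℝ))) atTop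
      (nhds (2 ^ k)) := by
    have := tendsto_finset_prod (f := fun (j : ℕ) (N : ℕ) => 2 - ((k + j : ℕ) : ℝ) / (N : ℝ))
      (a := fun _ => (2 : ℝ)) (range k) (fun j _ => tendsto_prod_factor (k + j))
    simpa [Finset.prod_const, Finset.card_range] using this
  have hexp := Real.tendsto_one_add_div_pow_exp (-2)
  have hbase : Tendsto (fun N : ℕ => ((1 + (-2) / (N : ℝ)) ^ N) ^ 2) atTop
      (nhds (Real.exp (-2) * Real.exp (-2))) := by
    simpa [sq] using hexp.mul hexp
  have hone : Tendsto (fun N : ℕ => (1 + (-2) / (N : ℝ)) ^ (2 * k)) atTop (nhds 1) := by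
    have hb : Tendsto (fun N : ℕ => 1 + (-2) / (N : ℝ)) atTop (nhds 1) := by
      have h : Tendsto (fun N : ℕ => (-2 : ℝ) / (N : ℝ)) atTop (nhds 0) := by
        simpa [div_eq_mul_inv, mul_comm] using
          tendsto_one_div_atTop_nhds_zero_nat.const_mul (-2 : ℝ)
      simpa using tendsto_const_nhds.add h
    simpa using hb.pow (2 * k)
  have hmodel : Tendsto (fun N : ℕ =>
      ((1 / (Nat.factorial k : ℝ)) * (∏ j ∈ range k, (2 - (j : ℝ) / (N : ℝ)))) *
      ((1 / (Nat.factorial k : ℝ)) * (∏ j ∈ range k, (2 - ((k + j : ℕ) : ℝ) / (N : ℝ)))) *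
        (((1 + (-2) / (N : ℝ)) ^ N) ^ 2 / (1 + (-2) / (N : ℝ)) ^ (2 * k))) atTop
      (nhds (((1 / (Nat.factorial k : ℝ)) * 2 ^ k) * ((1 / (Nat.factorial k : ℝ)) * 2 ^ k) *
        ((Real.exp (-2) * Real.exp (-2)) / 1))) :=
    ((tendsto_const_nhds.mul hprod1).mul (tendsto_const_nhds.mul hprod2)).mul
      (hbase.div hone one_ne_zero)
  have hval : ((1 / (Nat.factorial k : ℝ)) * 2 ^ k) * ((1 / (Nat.factorial k : ℝ)) * 2 ^ k) *
      ((Real.exp (-2) * Real.exp (-2)) / 1) = (poisson2 k) ^ 2 := by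
    unfold poisson2
    field_simp
  rw [hval] at hmodel
  refine hmodel.congr' ?_
  filter_upwards [eventually_ge_atTop (2 * k + 3)] with N hN
  have hk2N : k ≤ 2 * N := by omega
  have hkk : k ≤ 2 * N - k := by omega
  have h2k2N : 2 * k ≤ 2 * N := by omega
  have hN0 : (N : ℝ) ≠ 0 := Nat.cast_ne_zero.2 (by omega)
  have hNR : (3 : ℝ) ≤ (N : ℝ) := by exact_mod_cast (by omega : 3 ≤ N)
  have hN2 : (N : ℝ) - 2 ≠ 0 := by nlinarith
  have hc2 : (cTwo N k : ℝ)
      = (∏ j ∈ range k, (2 * (N : ℝ) - j)) / (Nat.factorial k : ℝ) *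
        ((∏ j ∈ range k, (2 * (N : ℝ) - k - j)) / (Nat.factorial k : ℝ)) *
        ((N : ℝ) - 2) ^ (2 * N - 2 * k) := by
    unfold cTwo
    rw [Nat.cast_mul, Nat.cast_mul, Nat.cast_pow, cast_choose_eq (2 * N) k hk2N,
      cast_choose_eq (2 * N - k) k hkk,
      Nat.cast_sub (by omega : 2 ≤ N), Nat.cast_sub (by omega : k ≤ 2 * N)]
    have hexpo : 2 * N - k - k = 2 * N - 2 * k := by omega
    rw [hexpo]
    have hprodc : ∏ j ∈ range k, (((2 * N : ℕ) : ℝ) - (k : ℝ) - j)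
        = ∏ j ∈ range k, (2 * (N : ℝ) - k - j) := by
      refine Finset.prod_congr rfl fun j hj => ?_
      push_cast
      ring
    push_cast
    ring
  rw [hc2]
  have e1 : (1 : ℝ) + (-2) / (N : ℝ) = ((N : ℝ) - 2) / N := by field_simp; ring
  have e2a : ∏ j ∈ range k, (2 - (j : ℝ) / (N : ℝ))
      = (∏ j ∈ range k, (2 * (N : ℝ) - j)) / (N : ℝ) ^ k := by
    have hfac2 : ∀ j ∈ range k, (2 - (j : ℝ) / (N : ℝ)) = (2 * (N : ℝ) - j) / (N : ℝ) := by
      intro j hj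
      field_simp
    rw [Finset.prod_congr rfl hfac2, Finset.prod_div_distrib, Finset.prod_const,
      Finset.card_range]
  have e2b : ∏ j ∈ range k, (2 - ((k + j : ℕ) : ℝ) / (N : ℝ))
      = (∏ j ∈ range k, (2 * (N : ℝ) - k - j)) / (N : ℝ) ^ k := by
    have hfac2 : ∀ j ∈ range k,
        (2 - ((k + j : ℕ) : ℝ) / (N : ℝ)) = (2 * (N : ℝ) - k - j) / (N : ℝ) := by
      intro j hj
      push_cast
      field_simp
      ring
    rw [Finset.prod_congr rfl hfac2, Finset.prod_div_distrib, Finset.prod_const,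
      Finset.card_range]
  have e3 : (((((N : ℝ) - 2) / N) ^ N) ^ 2) / ((((N : ℝ) - 2) / N) ^ (2 * k))
      = ((N : ℝ) - 2) ^ (2 * N - 2 * k) / (N : ℝ) ^ (2 * N - 2 * k) := by
    calc (((((N : ℝ) - 2) / N) ^ N) ^ 2) / ((((N : ℝ) - 2) / N) ^ (2 * k))
        = (((N : ℝ) - 2) / N) ^ (2 * N) * ((((N : ℝ) - 2) / N) ^ (2 * k))⁻¹ := by
          rw [← pow_mul, mul_comm N 2, div_eq_mul_inv]
      _ = (((N : ℝ) - 2) / N) ^ (2 * N - 2 * k) :=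
          (pow_sub₀ _ (div_ne_zero hN2 hN0) h2k2N).symm
      _ = ((N : ℝ) - 2) ^ (2 * N - 2 * k) / (N : ℝ) ^ (2 * N - 2 * k) := by rw [div_pow]
  rw [e2a, e2b, e1, e3]
  have hNN : (N : ℝ) ^ (2 * N) = (N : ℝ) ^ k * (N : ℝ) ^ k * (N : ℝ) ^ (2 * N - 2 * k) := by
    rw [← pow_add, ← pow_add]
    congr 1
    omega
  rw [hNN]
  field_simp
  try exact Or.inl trivial


lemma cOne_le (N k : ℕ) : Nat.factorial k * cOne N k ≤ 2 ^ k * N ^ (2 * N) := by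
  by_cases hk : k ≤ 2 * N
  · have h1 : Nat.factorial k * (2 * N).choose k ≤ (2 * N) ^ k := by
      rw [← Nat.descFactorial_eq_factorial_mul_choose]
      exact Nat.descFactorial_le_pow _ _
    have h2 : (N - 1) ^ (2 * N - k) ≤ N ^ (2 * N - k) :=
      Nat.pow_le_pow_left (Nat.sub_le N 1) _
    calc Nat.factorial k * cOne N k
        = (Nat.factorial k * (2 * N).choose k) * (N - 1) ^ (2 * N - k) := by
          unfold cOne; ring
      _ ≤ (2 * N) ^ k * N ^ (2 * N - k) :=
          Nat.mul_le_mul h1 h2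
      _ = 2 ^ k * (N ^ k * N ^ (2 * N - k)) := by rw [mul_pow]; ring
      _ = 2 ^ k * N ^ (2 * N) := by rw [← pow_add, Nat.add_sub_cancel' hk]
  · unfold cOne
    rw [Nat.choose_eq_zero_of_lt (by omega)]
    simp
lemma bq_le (N k : ℕ) (hN : 1 ≤ N) :
    (cOne N k : ℝ) / (N : ℝ) ^ (2 * N) ≤ 2 ^ k / (Nat.factorial k : ℝ) := by
  have hNpos : (0 : ℝ) < (N : ℝ) ^ (2 * N) := by positivity
  have hfpos : (0 : ℝ) < (Nat.factorial k : ℝ) := by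
    exact_mod_cast Nat.factorial_pos k
  rw [div_le_div_iff₀ hNpos hfpos]
  have := cOne_le N k
  have hcast : (Nat.factorial k : ℝ) * (cOne N k : ℝ) ≤ 2 ^ k * (N : ℝ) ^ (2 * N) := by
    exact_mod_cast this
  nlinarith [hcast]

lemma poisson2_nonneg (k : ℕ) : 0 ≤ poisson2 k := by
  unfold poisson2
  positivity

lemma poisson2_le (k : ℕ) : poisson2 k ≤ 2 ^ k / (Nat.factorial k : ℝ) := by
  unfold poisson2
  have h1 : Real.exp (-2) ≤ 1 := by
    rw [← Real.exp_zero]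
    exact Real.exp_le_exp.2 (by norm_num)
  have hfpos : (0 : ℝ) < (Nat.factorial k : ℝ) := by exact_mod_cast Nat.factorial_pos k
  rw [div_le_div_iff₀ hfpos hfpos]
  have h2 : (0 : ℝ) ≤ 2 ^ k * (Nat.factorial k : ℝ) := by positivity
  calc Real.exp (-2) * 2 ^ k * (Nat.factorial k : ℝ)
      = Real.exp (-2) * (2 ^ k * (Nat.factorial k : ℝ)) := by ring
    _ ≤ 1 * (2 ^ k * (Nat.factorial k : ℝ)) := mul_le_mul_of_nonneg_right h1 h2
    _ = 2 ^ k * (Nat.factorial k : ℝ) := one_mul _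

lemma empDeg_nonneg (N k : ℕ) (ω : Fin (2 * N) → Fin N) : 0 ≤ empDeg N k ω := by
  unfold empDeg
  refine mul_nonneg (by positivity) (Finset.sum_nonneg fun i _ => ?_)
  split <;> norm_num

lemma empDeg_eq_zero (N k : ℕ) (ω : Fin (2 * N) → Fin N) (hk : 2 * N < k) :
    empDeg N k ω = 0 := by
  unfold empDeg
  have : ∀ i : Fin N, (if (univ.filter (fun b => ω b = i)).card = k then (1 : ℝ) else 0) = 0 := by
    intro i
    rw [if_neg]
    intro h
    have := Finset.card_filter_le (univ : Finset (Fin (2 * N))) (fun b => ω b = i)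
    rw [h, card_univ, Fintype.card_fin] at this
    omega
  rw [Finset.sum_congr rfl fun i _ => this i, Finset.sum_const_zero, mul_zero]

lemma weight_le (k : ℕ) : ((k : ℝ) + 1) ^ 2 ≤ 4 * 4 ^ k := by
  induction k with
  | zero => norm_num
  | succ n ih =>
    have h : ((n : ℝ) + 1 + 1) ^ 2 ≤ 4 * ((n : ℝ) + 1) ^ 2 := by nlinarith [Nat.cast_nonneg (α := ℝ) n]
    push_cast
    calc ((n : ℝ) + 1 + 1) ^ 2 ≤ 4 * ((n : ℝ) + 1) ^ 2 := h
      _ ≤ 4 * (4 * 4 ^ n) := by nlinarith [ih]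
      _ = 4 * 4 ^ (n + 1) := by ring

lemma summable_bound :
    Summable (fun k : ℕ => ((k : ℝ) + 1) ^ 2 * (2 * (2 ^ k / (Nat.factorial k : ℝ)))) := by
  refine Summable.of_nonneg_of_le (fun k => by positivity) (fun k => ?_)
    ((Real.summable_pow_div_factorial 8).mul_left 8)
  have h1 : ((k : ℝ) + 1) ^ 2 ≤ 4 * 4 ^ k := weight_le k
  have hfpos : (0 : ℝ) < (Nat.factorial k : ℝ) := by exact_mod_cast Nat.factorial_pos k
  have h2 : (0 : ℝ) ≤ 2 * (2 ^ k / (Nat.factorial k : ℝ)) := by positivity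
  calc ((k : ℝ) + 1) ^ 2 * (2 * (2 ^ k / (Nat.factorial k : ℝ)))
      ≤ 4 * 4 ^ k * (2 * (2 ^ k / (Nat.factorial k : ℝ))) := by
        exact mul_le_mul_of_nonneg_right h1 h2
    _ = 8 * ((4 ^ k * 2 ^ k) / (Nat.factorial k : ℝ)) := by ring
    _ = 8 * (8 ^ k / (Nat.factorial k : ℝ)) := by
        rw [← mul_pow]; norm_num

lemma summable_wp : Summable (fun k : ℕ => ((k : ℝ) + 1) ^ 2 * poisson2 k) := by
  refine Summable.of_nonneg_of_le
    (fun k => mul_nonneg (by positivity) (poisson2_nonneg k)) (fun k => ?_) summable_bound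
  refine mul_le_mul_of_nonneg_left ?_ (by positivity)
  have h := poisson2_le k
  have hx : (0 : ℝ) ≤ 2 ^ k / (Nat.factorial k : ℝ) := by positivity
  linarith

lemma summable_S (N : ℕ) (ω : Fin (2 * N) → Fin N) :
    Summable (fun k : ℕ => ((k : ℝ) + 1) ^ 2 * |empDeg N k ω - poisson2 k|) := by
  rw [← summable_nat_add_iff (2 * N + 1)]
  refine Summable.congr ((summable_nat_add_iff (2 * N + 1)).2 summable_wp) fun k => ?_
  rw [empDeg_eq_zero N _ ω (by omega), zero_sub, abs_neg,
    abs_of_nonneg (poisson2_nonneg _)]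

noncomputable def Dd (N k : ℕ) : ℝ :=
  (∑ ω : Fin (2 * N) → Fin N, |empDeg N k ω - poisson2 k|) / (N : ℝ) ^ (2 * N)

noncomputable def Vv (N k : ℕ) : ℝ :=
  (∑ ω : Fin (2 * N) → Fin N, (empDeg N k ω - poisson2 k) ^ 2) / (N : ℝ) ^ (2 * N)

lemma Dd_nonneg (N k : ℕ) : 0 ≤ Dd N k :=
  div_nonneg (Finset.sum_nonneg fun _ _ => abs_nonneg _) (by positivity)

lemma Vv_nonneg (N k : ℕ) : 0 ≤ Vv N k :=
  div_nonneg (Finset.sum_nonneg fun _ _ => sq_nonneg _) (by positivity)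

lemma card_omega (N : ℕ) :
    ((Finset.univ : Finset (Fin (2 * N) → Fin N)).card : ℝ) = (N : ℝ) ^ (2 * N) := by
  classical
  rw [card_univ, Fintype.card_fun, Fintype.card_fin, Fintype.card_fin]
  push_cast
  ring

lemma Dd_le_bound (N k : ℕ) (hN : 1 ≤ N) :
    Dd N k ≤ 2 * (2 ^ k / (Nat.factorial k : ℝ)) := by
  have hMpos : (0 : ℝ) < (N : ℝ) ^ (2 * N) := by
    have : (0:ℝ) < (N:ℝ) := by exact_mod_cast hN
    positivity
  have hsum : ∑ ω : Fin (2 * N) → Fin N, |empDeg N k ω - poisson2 k|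
      ≤ ∑ ω : Fin (2 * N) → Fin N, (empDeg N k ω + poisson2 k) := by
    refine Finset.sum_le_sum fun ω _ => ?_
    calc |empDeg N k ω - poisson2 k| ≤ |empDeg N k ω| + |poisson2 k| := abs_sub _ _
      _ = empDeg N k ω + poisson2 k := by
          rw [abs_of_nonneg (empDeg_nonneg N k ω), abs_of_nonneg (poisson2_nonneg k)]
  have hsum2 : ∑ ω : Fin (2 * N) → Fin N, (empDeg N k ω + poisson2 k)
      = (cOne N k : ℝ) + (N : ℝ) ^ (2 * N) * poisson2 k := by
    rw [Finset.sum_add_distrib, sum_empDeg N k hN, Finset.sum_const, nsmul_eq_mul,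
      card_omega N]
    try ring
  calc Dd N k ≤ ((cOne N k : ℝ) + (N : ℝ) ^ (2 * N) * poisson2 k) / (N : ℝ) ^ (2 * N) := by
        unfold Dd
        exact (div_le_div_iff_of_pos_right hMpos).2 (hsum.trans (le_of_eq hsum2))
    _ = (cOne N k : ℝ) / (N : ℝ) ^ (2 * N) + poisson2 k := by field_simp; try ring
    _ ≤ 2 ^ k / (Nat.factorial k : ℝ) + 2 ^ k / (Nat.factorial k : ℝ) :=
        add_le_add (bq_le N k hN) (poisson2_le k)
    _ = 2 * (2 ^ k / (Nat.factorial k : ℝ)) := by ring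

lemma tendsto_Vv (k : ℕ) : Tendsto (fun N : ℕ => Vv N k) atTop (nhds 0) := by
  have h0 : Tendsto (fun N : ℕ => 1 / (N : ℝ)) atTop (nhds 0) :=
    tendsto_one_div_atTop_nhds_zero_nat
  have hmodel : Tendsto (fun N : ℕ =>
      (1 / (N : ℝ)) * ((cOne N k : ℝ) / (N : ℝ) ^ (2 * N)) +
      (1 - 1 / (N : ℝ)) * ((cTwo N k : ℝ) / (N : ℝ) ^ (2 * N)) -
      2 * poisson2 k * ((cOne N k : ℝ) / (N : ℝ) ^ (2 * N)) + poisson2 k ^ 2) atTop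
      (nhds (0 * poisson2 k + (1 - 0) * poisson2 k ^ 2 -
        2 * poisson2 k * poisson2 k + poisson2 k ^ 2)) := by
    exact (((h0.mul (tendsto_bq k)).add
      ((tendsto_const_nhds.sub h0).mul (tendsto_cq k))).sub
      (tendsto_const_nhds.mul (tendsto_bq k))).add tendsto_const_nhds
  have hval : 0 * poisson2 k + (1 - 0) * poisson2 k ^ 2 -
      2 * poisson2 k * poisson2 k + poisson2 k ^ 2 = 0 := by ring
  rw [hval] at hmodel
  refine hmodel.congr' ?_
  filter_upwards [eventually_ge_atTop 1] with N hN
  have hN0 : (N : ℝ) ≠ 0 := Nat.cast_ne_zero.2 (by omega)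
  have hM : (N : ℝ) ^ (2 * N) ≠ 0 := pow_ne_zero _ hN0
  have hexp : ∑ ω : Fin (2 * N) → Fin N, (empDeg N k ω - poisson2 k) ^ 2
      = (∑ ω : Fin (2 * N) → Fin N, (empDeg N k ω) ^ 2)
        - 2 * poisson2 k * (∑ ω : Fin (2 * N) → Fin N, empDeg N k ω)
        + (N : ℝ) ^ (2 * N) * poisson2 k ^ 2 := by
    have hpt : ∀ ω ∈ (Finset.univ : Finset (Fin (2 * N) → Fin N)),
        (empDeg N k ω - poisson2 k) ^ 2
          = ((empDeg N k ω) ^ 2 - 2 * poisson2 k * empDeg N k ω) + poisson2 k ^ 2 := by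
      intro ω _
      ring
    rw [Finset.sum_congr rfl hpt, Finset.sum_add_distrib, Finset.sum_sub_distrib,
      ← Finset.mul_sum, Finset.sum_const, nsmul_eq_mul, card_omega N]
  unfold Vv
  rw [hexp, sum_empDeg_sq N k, sum_empDeg N k hN]
  field_simp

lemma tendsto_Dd (k : ℕ) : Tendsto (fun N : ℕ => Dd N k) atTop (nhds 0) := by
  refine squeeze_zero' (g := fun N => Real.sqrt (Vv N k))
    (Eventually.of_forall fun N => Dd_nonneg N k) ?_ ?_
  · filter_upwards [eventually_ge_atTop 1] with N hN
    have hNpos : (0:ℝ) < (N:ℝ) := by exact_mod_cast hN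
    have hMpos : (0 : ℝ) < (N : ℝ) ^ (2 * N) := by positivity
    refine (Real.le_sqrt (Dd_nonneg N k) (Vv_nonneg N k)).2 ?_
    have hCS := Finset.sum_mul_sq_le_sq_mul_sq (Finset.univ : Finset (Fin (2 * N) → Fin N))
      (fun ω => |empDeg N k ω - poisson2 k|) (fun _ => (1 : ℝ))
    simp only [mul_one, one_pow, sq_abs, Finset.sum_const, nsmul_eq_mul] at hCS
    rw [card_omega N] at hCS
    unfold Dd Vv
    rw [div_pow, div_le_div_iff₀ (by positivity) hMpos]
    calc (∑ ω : Fin (2 * N) → Fin N, |empDeg N k ω - poisson2 k|) ^ 2 * (N : ℝ) ^ (2 * N)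
        ≤ ((∑ ω : Fin (2 * N) → Fin N, (empDeg N k ω - poisson2 k) ^ 2) * (N : ℝ) ^ (2 * N))
            * (N : ℝ) ^ (2 * N) := mul_le_mul_of_nonneg_right hCS hMpos.le
      _ = (∑ ω : Fin (2 * N) → Fin N, (empDeg N k ω - poisson2 k) ^ 2)
            * ((N : ℝ) ^ (2 * N)) ^ 2 := by ring
  · have := (Real.continuous_sqrt.tendsto 0).comp (tendsto_Vv k)
    simpa [Function.comp_def] using this

/-- Convergence in probability of the empirical in-degree distribution to
Poisson(2) in the `(k+1)²`-weighted ℓ¹ norm: for every `ε > 0`,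
`P(∑_k (k+1)² |ξ_k^N − P_k^2| > ε) → 0` as `N → ∞`. -/
theorem empirical_indegree_to_poisson (ε : ℝ) (hε : 0 < ε) :
    Filter.Tendsto
      (fun N : ℕ =>
        ((Finset.univ.filter (fun ω : Fin (2 * N) → Fin N =>
            ε < ∑' k : ℕ, ((k : ℝ) + 1) ^ 2 * |empDeg N k ω - poisson2 k|)).card : ℝ)
          / (N : ℝ) ^ (2 * N))
      Filter.atTop (nhds 0) := by
  classical
  have hkey : Tendsto (fun N : ℕ => ∑' k : ℕ, ((k : ℝ) + 1) ^ 2 * Dd N k) atTop (nhds 0) := by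
    have h := tendsto_tsum_of_dominated_convergence (𝓕 := atTop)
      (f := fun (N : ℕ) (k : ℕ) => ((k : ℝ) + 1) ^ 2 * Dd N k) (g := fun _ => (0 : ℝ))
      (bound := fun k : ℕ => ((k : ℝ) + 1) ^ 2 * (2 * (2 ^ k / (Nat.factorial k : ℝ))))
      summable_bound
      (fun k => by simpa using (tendsto_Dd k).const_mul (((k : ℝ) + 1) ^ 2)) ?_
    · simpa using h
    · filter_upwards [eventually_ge_atTop 1] with N hN
      intro k
      rw [Real.norm_eq_abs, abs_of_nonneg (mul_nonneg (by positivity) (Dd_nonneg N k))]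
      exact mul_le_mul_of_nonneg_left (Dd_le_bound N k hN) (by positivity)
  refine squeeze_zero'
    (Eventually.of_forall fun N => div_nonneg (Nat.cast_nonneg _) (by positivity)) ?_
    (by simpa using hkey.const_mul ε⁻¹)
  filter_upwards [eventually_ge_atTop 1] with N hN
  have hNpos : (0 : ℝ) < (N : ℝ) := by exact_mod_cast hN
  have hMpos : (0 : ℝ) < (N : ℝ) ^ (2 * N) := by positivity
  set T := Finset.univ.filter (fun ω : Fin (2 * N) → Fin N =>
    ε < ∑' k : ℕ, ((k : ℝ) + 1) ^ 2 * |empDeg N k ω - poisson2 k|) with hT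
  have h1 : (T.card : ℝ) * ε
      ≤ ∑ ω ∈ T, ∑' k : ℕ, ((k : ℝ) + 1) ^ 2 * |empDeg N k ω - poisson2 k| := by
    rw [← nsmul_eq_mul, ← Finset.sum_const]
    refine Finset.sum_le_sum fun ω hω => ?_
    exact le_of_lt (Finset.mem_filter.1 hω).2
  have h2 : ∑ ω ∈ T, ∑' k : ℕ, ((k : ℝ) + 1) ^ 2 * |empDeg N k ω - poisson2 k|
      ≤ ∑ ω : Fin (2 * N) → Fin N, ∑' k : ℕ, ((k : ℝ) + 1) ^ 2 * |empDeg N k ω - poisson2 k| :=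
    Finset.sum_le_sum_of_subset_of_nonneg (Finset.subset_univ T)
      (fun ω _ _ => tsum_nonneg fun k => mul_nonneg (by positivity) (abs_nonneg _))
  have h3 : ∑ ω : Fin (2 * N) → Fin N, ∑' k : ℕ, ((k : ℝ) + 1) ^ 2 * |empDeg N k ω - poisson2 k|
      = ∑' k : ℕ, ∑ ω : Fin (2 * N) → Fin N, ((k : ℝ) + 1) ^ 2 * |empDeg N k ω - poisson2 k| :=
    (Summable.tsum_finsetSum fun ω _ => summable_S N ω).symm
  have h4 : ∀ k : ℕ, ∑ ω : Fin (2 * N) → Fin N, ((k : ℝ) + 1) ^ 2 * |empDeg N k ω - poisson2 k|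
      = (N : ℝ) ^ (2 * N) * (((k : ℝ) + 1) ^ 2 * Dd N k) := by
    intro k
    rw [← Finset.mul_sum]
    unfold Dd
    field_simp
    try ring
  have h5 : ∑' k : ℕ, ∑ ω : Fin (2 * N) → Fin N, ((k : ℝ) + 1) ^ 2 * |empDeg N k ω - poisson2 k|
      = (N : ℝ) ^ (2 * N) * ∑' k : ℕ, ((k : ℝ) + 1) ^ 2 * Dd N k := by
    rw [tsum_congr h4]
    exact tsum_mul_left
  have h6 : (T.card : ℝ) * ε
      ≤ (N : ℝ) ^ (2 * N) * ∑' k : ℕ, ((k : ℝ) + 1) ^ 2 * Dd N k := by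
    rw [← h5, ← h3]
    exact h1.trans h2
  have h7 := mul_le_mul_of_nonneg_right h6 (inv_nonneg.2 hε.le)
  rw [mul_assoc, mul_inv_cancel₀ (ne_of_gt hε), mul_one] at h7
  rw [div_le_iff₀ hMpos]
  calc (T.card : ℝ)
      ≤ (N : ℝ) ^ (2 * N) * (∑' k : ℕ, ((k : ℝ) + 1) ^ 2 * Dd N k) * ε⁻¹ := h7
    _ = ε⁻¹ * (∑' k : ℕ, ((k : ℝ) + 1) ^ 2 * Dd N k) * (N : ℝ) ^ (2 * N) := by ring
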